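/- Let f : ℝ^d → ℝ be differentiable, convex, L-smooth with L > 0, and (L0, L1)-smooth with L0 > 0, L1 > 0, and suppose f attains its minimum at x* with f* = f(x*). Let l* ≤ f*, σ² = f* − l*, T ≥ 1, and let the sequence (x_t)_{t=0,...,T} be generated by x_{t+1} = x_t − η_t ∇f(x_t) with η_t = (f(x_t) − l*)/(√T · ‖∇f(x_t)‖²) (where ∇f(x_t) ≠ 0 for all t < T). If f(x_t) − f* ≥ σ²/√T for all t ∈ {0, ..., T−1}, then min_{0 ≤ t ≤ T−1} f(x_t) − f* ≤ (8 L0 ‖x_0 − x*‖² + 2σ²)/√T + 128 L1² L ‖x_0 − x*‖⁴ / T + 8 L1² σ⁴ L / (L0² T). -/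

import Mathlib

/-!
Convexity gives `Δ_t := f x_t - f* ≤ ⟪∇f x_t, x_t - x*⟫`, so a step of length `η_t` decreases
`‖x_t - x*‖²` by at least `2 η_t Δ_t - η_t² ‖∇f x_t‖²`. If some `Δ_t ≤ 2σ²/√T` the bound is
immediate. Otherwise `σ²` is negligible against `Δ_t`, and the decrease is at least
`Δ_t / (4 √T K(Δ_t))` with `K(Δ) = L0 + L1 √(2LΔ)`: the descent lemma at `x_t - ∇f x_t / C`
gives `‖∇f x_t‖² ≤ 2 C Δ_t`, first for `C = L`, then, since the step stays within `1/L1`, for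
`C = L0 + L1 ‖∇f x_t‖ ≤ K(Δ_t)`. As `Δ ↦ Δ / K(Δ)` is increasing, every decrease is at least
that for the smallest gap `m`, hence `T m / (4 √T K(m)) ≤ ‖x_0 - x*‖²`; according to which
summand dominates `K(m)`, this yields `m ≤ 8 L0 ‖x_0 - x*‖² / √T` or
`m ≤ 128 L1² L ‖x_0 - x*‖⁴ / T`.
-/

open scoped RealInnerProductSpace
open Set Metric

theorem div_add_mul_sqrt_le {a b c m Δ : ℝ} (ha : 0 < a) (hb : 0 ≤ b) (hc : 0 < c)
    (hm : 0 ≤ m) (hmΔ : m ≤ Δ) :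
    m / (a + b * √(c * m)) ≤ Δ / (a + b * √(c * Δ)) := by
  have hsm : √(c * m) ^ 2 = c * m := Real.sq_sqrt (by positivity)
  have hsΔ : √(c * Δ) ^ 2 = c * Δ := Real.sq_sqrt (by nlinarith)
  have hsle : √(c * m) ≤ √(c * Δ) := Real.sqrt_le_sqrt (by gcongr)
  have hcross : m * √(c * Δ) ≤ Δ * √(c * m) := by
    have hprod : 0 ≤ √(c * m) * √(c * Δ) * (√(c * Δ) - √(c * m)) :=
      mul_nonneg (by positivity) (sub_nonneg.2 hsle)
    have e : √(c * m) * √(c * Δ) * (√(c * Δ) - √(c * m)) =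
        c * (Δ * √(c * m) - m * √(c * Δ)) := by
      linear_combination √(c * m) * hsΔ - √(c * Δ) * hsm
    rw [e] at hprod
    linarith [(mul_nonneg_iff_of_pos_left hc).1 hprod]
  rw [div_le_div_iff₀ (by positivity) (by positivity)]
  nlinarith

theorem div_le_polyak_decrease {Δ σ2 sT K g η : ℝ} (hσ2 : 0 ≤ σ2) (hsT : 1 ≤ sT) (hK : 0 < K)
    (hg : 0 < g) (hgK : g ^ 2 ≤ 2 * K * Δ) (hΔ : 2 * σ2 / sT < Δ)
    (hη : η = (Δ + σ2) / (sT * g ^ 2)) :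
    Δ / K / (4 * sT) ≤ 2 * η * Δ - η ^ 2 * g ^ 2 := by
  have hsT0 : 0 < sT := by linarith
  have hΔ0 : 0 < Δ := lt_of_le_of_lt (by positivity) hΔ
  rw [div_lt_iff₀ hsT0] at hΔ
  have hηg : η * g ^ 2 = (Δ + σ2) / sT := by rw [hη]; field_simp
  have hηg_le : (Δ + σ2) / sT ≤ 3 / 2 * Δ := by
    rw [div_le_iff₀ hsT0]; nlinarith
  have hη_ge : 1 / (2 * sT * K) ≤ η := by
    rw [hη, div_le_div_iff₀ (by positivity) (by positivity)]
    nlinarith [mul_le_mul_of_nonneg_left hgK hsT0.le, mul_nonneg (mul_nonneg hσ2 hsT0.le) hK.le]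
  calc Δ / K / (4 * sT) = 1 / (2 * sT * K) * (Δ / 2) := by field_simp; ring
    _ ≤ η * (2 * Δ - η * g ^ 2) := by
      gcongr
      · exact le_trans (by positivity) hη_ge
      · linarith
    _ = 2 * η * Δ - η ^ 2 * g ^ 2 := by ring

theorem natCast_mul_le_of_le_sub {a : ℕ → ℝ} {c : ℝ} {T : ℕ}
    (hstep : ∀ t < T, a (t + 1) ≤ a t - c) (hT : 0 ≤ a T) : T * c ≤ a 0 := by
  suffices h : ∀ n ≤ T, a n + n * c ≤ a 0 by linarith [h T le_rfl]
  intro n hn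
  induction n with
  | zero => simp
  | succ n ih =>
    push_cast
    linarith [hstep n hn, ih (by omega)]

theorem le_div_sqrt_add_div_of_mul_le {L L0 L1 T m R : ℝ} (hL : 0 ≤ L) (hL0 : 0 < L0)
    (hL1 : 0 ≤ L1) (hT : 0 < T) (hm : 0 ≤ m) (hR : 0 ≤ R)
    (h : T * (m / (L0 + L1 * √(2 * L * m)) / (4 * √T)) ≤ R) :
    m ≤ 8 * L0 * R / √T + 128 * L1 ^ 2 * L * R ^ 2 / T := by
  set s := √(2 * L * m)
  have hs2 : s ^ 2 = 2 * L * m := Real.sq_sqrt (by positivity)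
  have hsT : 0 < √T := Real.sqrt_pos.2 hT
  have hsT2 : √T ^ 2 = T := Real.sq_sqrt hT.le
  have hkey : √T * m ≤ 4 * (L0 + L1 * s) * R := by
    have hK : 0 < L0 + L1 * s := by positivity
    have e : T * (m / (L0 + L1 * s) / (4 * √T)) = √T * m / (4 * (L0 + L1 * s)) := by
      field_simp
      rw [hsT2, mul_comm]
    rw [e, div_le_iff₀ (by positivity)] at h
    linarith
  have h1 : 0 ≤ 8 * L0 * R / √T := by positivity
  have h2 : 0 ≤ 128 * L1 ^ 2 * L * R ^ 2 / T := by positivity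
  rcases le_or_gt (L1 * s) L0 with hsmall | hlarge
  · have : m ≤ 8 * L0 * R / √T := by rw [le_div_iff₀ hsT]; nlinarith
    linarith
  · have hlin : √T * m ≤ 8 * L1 * s * R := by nlinarith
    have hsq : T * m ^ 2 ≤ 128 * L1 ^ 2 * L * R ^ 2 * m := by
      have := pow_le_pow_left₀ (by positivity) hlin 2
      linear_combination this - m ^ 2 * hsT2 + 64 * L1 ^ 2 * R ^ 2 * hs2
    have : m ≤ 128 * L1 ^ 2 * L * R ^ 2 / T := by
      rw [le_div_iff₀ hT]
      rcases hm.eq_or_lt with rfl | hm0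
      · rw [zero_mul]; positivity
      · nlinarith
    linarith

section InnerProductSpace

variable {E : Type*} [NormedAddCommGroup E] [InnerProductSpace ℝ E]

theorem norm_sub_smul_sub_sq_le {x g z : E} {η Δ : ℝ} (hη : 0 ≤ η) (hΔ : Δ ≤ ⟪g, x - z⟫) :
    ‖x - η • g - z‖ ^ 2 ≤ ‖x - z‖ ^ 2 - (2 * η * Δ - η ^ 2 * ‖g‖ ^ 2) := by
  rw [sub_right_comm, norm_sub_sq_real, inner_smul_right, real_inner_comm, norm_smul, mul_pow,
    Real.norm_of_nonneg hη]
  nlinarith [mul_le_mul_of_nonneg_left hΔ hη]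

variable [CompleteSpace E] {f : E → ℝ}

theorem DifferentiableAt.hasDerivAt_add_smul {x v : E} {s : ℝ}
    (hf : DifferentiableAt ℝ f (x + s • v)) :
    HasDerivAt (fun t : ℝ => f (x + t • v)) ⟪gradient f (x + s • v), v⟫ s := by
  have hline : HasDerivAt (fun t : ℝ => x + t • v) v s := by
    simpa using ((hasDerivAt_id s).smul_const v).const_add x
  simpa [InnerProductSpace.toDual_apply_apply, Function.comp_def] using
    hf.hasGradientAt.hasFDerivAt.comp_hasDerivAt s hline

theorem ConvexOn.add_inner_gradient_le (hconv : ConvexOn ℝ univ f) {a : E}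
    (hf : DifferentiableAt ℝ f a) (b : E) : f a + ⟪gradient f a, b - a⟫ ≤ f b := by
  have hline : ConvexOn ℝ univ fun t : ℝ => f (a + t • (b - a)) := by
    simpa [Function.comp_def, AffineMap.lineMap_apply, add_comm] using
      hconv.comp_affineMap (AffineMap.lineMap a b)
  have hslope := hline.le_slope_of_hasDerivAt (mem_univ 0) (mem_univ 1) zero_lt_one
    (by simpa using (zero_smul ℝ (b - a) ▸ add_zero a ▸ hf).hasDerivAt_add_smul)
  simp only [slope_def_field, zero_smul, add_zero, one_smul, add_sub_cancel, sub_zero,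
    div_one] at hslope
  linarith

theorem le_add_inner_gradient_add_sq (hf : Differentiable ℝ f) {C : ℝ} (x v : E)
    (hC : ∀ y ∈ closedBall x ‖v‖, ‖gradient f y - gradient f x‖ ≤ C * ‖y - x‖) :
    f (x + v) ≤ f x + ⟪gradient f x, v⟫ + C / 2 * ‖v‖ ^ 2 := by
  set φ : ℝ → ℝ := fun s => f (x + s • v) - s * ⟪gradient f x, v⟫ - C / 2 * ‖v‖ ^ 2 * s ^ 2
  have hφ : ∀ s, HasDerivAt φ
      (⟪gradient f (x + s • v), v⟫ - ⟪gradient f x, v⟫ - C * ‖v‖ ^ 2 * s) s := fun s => by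
    have hpow := (hasDerivAt_pow 2 s).const_mul (C / 2 * ‖v‖ ^ 2)
    refine ((((hf _).hasDerivAt_add_smul).sub
      ((hasDerivAt_id s).mul_const ⟪gradient f x, v⟫)).sub hpow).congr_deriv ?_
    simp only [one_mul, Nat.cast_ofNat]
    ring
  have hanti : AntitoneOn φ (Icc 0 1) := by
    refine antitoneOn_of_hasDerivWithinAt_nonpos (convex_Icc 0 1)
      (fun s _ => (hφ s).continuousAt.continuousWithinAt)
      (fun s _ => (hφ s).hasDerivWithinAt) fun s hs => ?_
    rw [interior_Icc] at hs
    have hsv : ‖(x + s • v) - x‖ = s * ‖v‖ := by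
      rw [add_sub_cancel_left, norm_smul, Real.norm_of_nonneg hs.1.le]
    have hball : x + s • v ∈ closedBall x ‖v‖ := by
      rw [mem_closedBall, dist_eq_norm, hsv]
      exact mul_le_of_le_one_left (norm_nonneg v) hs.2.le
    have hcs := real_inner_le_norm (gradient f (x + s • v) - gradient f x) v
    rw [inner_sub_left] at hcs
    have hbound := mul_le_mul_of_nonneg_right (hC _ hball) (norm_nonneg v)
    rw [hsv] at hbound
    nlinarith
  have h := hanti (left_mem_Icc.2 zero_le_one) (right_mem_Icc.2 zero_le_one) zero_le_one
  simp only [φ, zero_smul, add_zero, one_smul, zero_mul, sub_zero, one_mul, one_pow, ne_eq,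
    OfNat.ofNat_ne_zero, not_false_eq_true, zero_pow, mul_zero] at h
  linarith

theorem sq_norm_gradient_le_of_norm_gradient_sub_le (hf : Differentiable ℝ f) {xstar : E}
    (hmin : ∀ y, f xstar ≤ f y) {C : ℝ} (hC0 : 0 < C) (p : E)
    (hC : ∀ y ∈ closedBall p (‖gradient f p‖ / C),
      ‖gradient f y - gradient f p‖ ≤ C * ‖y - p‖) :
    ‖gradient f p‖ ^ 2 ≤ 2 * C * (f p - f xstar) := by
  set g := gradient f p
  have hv : ‖-C⁻¹ • g‖ = ‖g‖ / C := by
    rw [norm_smul, norm_neg, norm_inv, Real.norm_of_nonneg hC0.le, inv_mul_eq_div]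
  have hdescent := le_add_inner_gradient_add_sq hf p (-C⁻¹ • g) (hv ▸ hC)
  rw [hv, inner_smul_right, real_inner_self_eq_norm_sq] at hdescent
  have hstep : f p + -C⁻¹ * ‖g‖ ^ 2 + C / 2 * (‖g‖ / C) ^ 2 = f p - ‖g‖ ^ 2 / (2 * C) := by
    field_simp; ring
  have := hmin (p + -C⁻¹ • g)
  have hle : ‖g‖ ^ 2 / (2 * C) ≤ f p - f xstar := by linarith
  rwa [div_le_iff₀ (by positivity), mul_comm] at hle

theorem sq_norm_gradient_le_of_lipschitz (hf : Differentiable ℝ f) {xstar : E}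
    (hmin : ∀ y, f xstar ≤ f y) {L : ℝ} (hL : 0 < L)
    (hLsmooth : ∀ x y, ‖gradient f x - gradient f y‖ ≤ L * ‖x - y‖) (p : E) :
    ‖gradient f p‖ ^ 2 ≤ 2 * L * (f p - f xstar) :=
  sq_norm_gradient_le_of_norm_gradient_sub_le hf hmin hL p fun y _ => hLsmooth y p

theorem sq_norm_gradient_le_of_L0L1 (hf : Differentiable ℝ f) {xstar : E}
    (hmin : ∀ y, f xstar ≤ f y) {L0 L1 : ℝ} (hL0 : 0 < L0) (hL1 : 0 < L1)
    (hsmooth : ∀ x y, ‖x - y‖ ≤ 1 / L1 →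
      ‖gradient f x - gradient f y‖ ≤ (L0 + L1 * ‖gradient f x‖) * ‖x - y‖) (p : E) :
    ‖gradient f p‖ ^ 2 ≤ 2 * (L0 + L1 * ‖gradient f p‖) * (f p - f xstar) := by
  refine sq_norm_gradient_le_of_norm_gradient_sub_le hf hmin (by positivity) p fun y hy => ?_
  have hradius : ‖gradient f p‖ / (L0 + L1 * ‖gradient f p‖) ≤ 1 / L1 := by
    rw [div_le_div_iff₀ (by positivity) hL1]
    linarith
  rw [mem_closedBall, dist_eq_norm] at hy
  rw [norm_sub_rev y p] at hy ⊢
  rw [norm_sub_rev]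
  exact hsmooth p y (hy.trans hradius)

theorem sq_norm_gradient_le_of_L0L1_of_lipschitz (hf : Differentiable ℝ f) {xstar : E}
    (hmin : ∀ y, f xstar ≤ f y) {L L0 L1 : ℝ} (hL : 0 < L) (hL0 : 0 < L0) (hL1 : 0 < L1)
    (hLsmooth : ∀ x y, ‖gradient f x - gradient f y‖ ≤ L * ‖x - y‖)
    (hsmooth : ∀ x y, ‖x - y‖ ≤ 1 / L1 →
      ‖gradient f x - gradient f y‖ ≤ (L0 + L1 * ‖gradient f x‖) * ‖x - y‖) (p : E) :
    ‖gradient f p‖ ^ 2 ≤ 2 * (L0 + L1 * √(2 * L * (f p - f xstar))) * (f p - f xstar) := by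
  have hgap : 0 ≤ f p - f xstar := sub_nonneg.2 (hmin p)
  have hnorm : ‖gradient f p‖ ≤ √(2 * L * (f p - f xstar)) :=
    Real.le_sqrt_of_sq_le (sq_norm_gradient_le_of_lipschitz hf hmin hL hLsmooth p)
  calc ‖gradient f p‖ ^ 2 ≤ 2 * (L0 + L1 * ‖gradient f p‖) * (f p - f xstar) :=
        sq_norm_gradient_le_of_L0L1 hf hmin hL0 hL1 hsmooth p
    _ ≤ 2 * (L0 + L1 * √(2 * L * (f p - f xstar))) * (f p - f xstar) := by gcongr

theorem ConvexOn.norm_polyak_step_sub_sq_le (hconv : ConvexOn ℝ univ f) {x xstar : E}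
    (hf : DifferentiableAt ℝ f x) (hg : gradient f x ≠ 0) {σ2 sT K : ℝ} (hσ2 : 0 ≤ σ2)
    (hsT : 1 ≤ sT) (hK : 0 < K) (hgK : ‖gradient f x‖ ^ 2 ≤ 2 * K * (f x - f xstar))
    (hgap : 2 * σ2 / sT < f x - f xstar) :
    ‖x - ((f x - f xstar + σ2) / (sT * ‖gradient f x‖ ^ 2)) • gradient f x - xstar‖ ^ 2 ≤
      ‖x - xstar‖ ^ 2 - (f x - f xstar) / K / (4 * sT) := by
  have hgap0 : 0 < f x - f xstar := lt_of_le_of_lt (by positivity) hgap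
  have hη : 0 ≤ (f x - f xstar + σ2) / (sT * ‖gradient f x‖ ^ 2) :=
    div_nonneg (by linarith) (mul_nonneg (by linarith) (sq_nonneg _))
  have hinner : f x - f xstar ≤ ⟪gradient f x, x - xstar⟫ := by
    have := hconv.add_inner_gradient_le hf xstar
    rw [← neg_sub, inner_neg_right] at this
    linarith
  refine (norm_sub_smul_sub_sq_le hη hinner).trans (sub_le_sub_left ?_ _)
  exact div_le_polyak_decrease hσ2 hsT hK (norm_pos_iff.2 hg) hgK hgap rfl

end InnerProductSpace

/-- Convergence of Inexact Polyak Stepsize under the assumption that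
`f(x_t) − f* ≥ σ²/√T` for all iterates. -/
theorem inexact_polyak_convergence_conditional {d : ℕ}
    (f : EuclideanSpace ℝ (Fin d) → ℝ) (L L0 L1 : ℝ)
    (hL : 0 < L) (hL0 : 0 < L0) (hL1 : 0 < L1)
    (hdiff : Differentiable ℝ f)
    (hconv : ConvexOn ℝ Set.univ f)
    (hLsmooth : ∀ x y : EuclideanSpace ℝ (Fin d),
      ‖gradient f x - gradient f y‖ ≤ L * ‖x - y‖)
    (hsmooth : ∀ x y : EuclideanSpace ℝ (Fin d), ‖x - y‖ ≤ 1 / L1 →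
      ‖gradient f x - gradient f y‖ ≤ (L0 + L1 * ‖gradient f x‖) * ‖x - y‖)
    (xstar : EuclideanSpace ℝ (Fin d)) (hmin : ∀ y, f xstar ≤ f y)
    (lstar : ℝ) (hlstar : lstar ≤ f xstar)
    (σ2 : ℝ) (hσ2 : σ2 = f xstar - lstar)
    (T : ℕ) (hT : 1 ≤ T)
    (x : ℕ → EuclideanSpace ℝ (Fin d))
    (hgrad : ∀ t < T, gradient f (x t) ≠ 0)
    (hstep : ∀ t < T, x (t + 1) = x t -
      ((f (x t) - lstar) / (Real.sqrt T * ‖gradient f (x t)‖ ^ 2)) • gradient f (x t)) :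
    (Finset.range T).inf' (Finset.nonempty_range_iff.mpr (by omega))
        (fun t => f (x t) - f xstar) ≤
      (8 * L0 * ‖x 0 - xstar‖ ^ 2 + 2 * σ2) / Real.sqrt T +
        128 * L1 ^ 2 * L * ‖x 0 - xstar‖ ^ 4 / T +
        8 * L1 ^ 2 * σ2 ^ 2 * L / (L0 ^ 2 * T) := by
  have hσ0 : 0 ≤ σ2 := by linarith
  have hT0 : (0 : ℝ) < T := by exact_mod_cast hT
  have hsT : 1 ≤ √(T : ℝ) := Real.one_le_sqrt.2 (by exact_mod_cast hT)
  obtain ⟨t₀, -, hinf⟩ := (Finset.range T).exists_mem_eq_inf'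
    (Finset.nonempty_range_iff.mpr (by omega)) (fun t => f (x t) - f xstar)
  have hmin_le : ∀ t < T, f (x t₀) - f xstar ≤ f (x t) - f xstar := fun t ht =>
    hinf ▸ Finset.inf'_le _ (Finset.mem_range.2 ht)
  rw [hinf, add_div, show ‖x 0 - xstar‖ ^ 4 = (‖x 0 - xstar‖ ^ 2) ^ 2 by ring]
  have : 0 ≤ 8 * L0 * ‖x 0 - xstar‖ ^ 2 / √T := by positivity
  have : 0 ≤ 2 * σ2 / √T := by positivity
  have : 0 ≤ 128 * L1 ^ 2 * L * (‖x 0 - xstar‖ ^ 2) ^ 2 / T := by positivity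
  have : 0 ≤ 8 * L1 ^ 2 * σ2 ^ 2 * L / (L0 ^ 2 * T) := by positivity
  by_cases hsmall : ∃ t < T, f (x t) - f xstar ≤ 2 * σ2 / √T
  · obtain ⟨t, ht, hgap⟩ := hsmall
    linarith [hmin_le t ht]
  push Not at hsmall
  set m := f (x t₀) - f xstar
  have hdecrease : ∀ t < T, ‖x (t + 1) - xstar‖ ^ 2 ≤
      ‖x t - xstar‖ ^ 2 - m / (L0 + L1 * √(2 * L * m)) / (4 * √T) := by
    intro t ht
    rw [hstep t ht, show f (x t) - lstar = f (x t) - f xstar + σ2 by rw [hσ2]; ring]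
    refine (hconv.norm_polyak_step_sub_sq_le (hdiff _) (hgrad t ht) hσ0 hsT (by positivity)
      (sq_norm_gradient_le_of_L0L1_of_lipschitz hdiff hmin hL hL0 hL1 hLsmooth hsmooth _)
      (hsmall t ht)).trans (sub_le_sub_left ?_ _)
    exact div_le_div_of_nonneg_right (div_add_mul_sqrt_le hL0 hL1.le (by positivity)
      (sub_nonneg.2 (hmin _)) (hmin_le t ht)) (by positivity)
  have hsum := natCast_mul_le_of_le_sub (a := fun t => ‖x t - xstar‖ ^ 2) hdecrease
    (by positivity)
  have hbound := le_div_sqrt_add_div_of_mul_le hL.le hL0 hL1.le hT0 (sub_nonneg.2 (hmin _))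
    (sq_nonneg ‖x 0 - xstar‖) hsum
  linarith
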